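/- Let n be a positive integer and let H be a finite group having property T(n,GK). Then the number of group homomorphisms from G_n(GK) to H equals the sum, over all group homomorphisms ρ: G_1(SK) → H, of the number of elements g ∈ H with g^n = ρ(D). -/

import Mathlib

/-- Relators of G₁(SK) = ⟨B, D, E | B D B = D B D, E D E = D E D⟩, with B, D, E = 0, 1, 2. -/
def G1SKRels : Set (FreeGroup (Fin 3)) :=
  let B : FreeGroup (Fin 3) := FreeGroup.of 0
  let D : FreeGroup (Fin 3) := FreeGroup.of 1
  let E : FreeGroup (Fin 3) := FreeGroup.of 2
  {B * D * B * (D * B * D)⁻¹,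
   E * D * E * (D * E * D)⁻¹}

/-- The knot group of the square knot (= that of the granny knot). -/
abbrev G1SK := PresentedGroup G1SKRels

/-- Relators of the n-th generalized knot group of the granny knot:
⟨b, d, e | b dⁿ bⁿ = dⁿ bⁿ d, d eⁿ dⁿ = eⁿ dⁿ e, e⁻ⁿ d⁻ⁿ e dⁿ eⁿ = bⁿ dⁿ b d⁻ⁿ b⁻ⁿ⟩,
with b, d, e = 0, 1, 2. -/
def GnGKRels (n : ℕ) : Set (FreeGroup (Fin 3)) :=
  let b : FreeGroup (Fin 3) := FreeGroup.of 0
  let d : FreeGroup (Fin 3) := FreeGroup.of 1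
  let e : FreeGroup (Fin 3) := FreeGroup.of 2
  {b * d ^ n * b ^ n * (d ^ n * b ^ n * d)⁻¹,
   d * e ^ n * d ^ n * (e ^ n * d ^ n * e)⁻¹,
   (e ^ n)⁻¹ * (d ^ n)⁻¹ * e * d ^ n * e ^ n * (b ^ n * d ^ n * b * (d ^ n)⁻¹ * (b ^ n)⁻¹)⁻¹}

/-- The n-th generalized knot group of the granny knot. -/
abbrev GnGK (n : ℕ) := PresentedGroup (GnGKRels n)

/-- A group `H` has property T(n,GK) if for every homomorphism ρ : G₁(SK) → H and every
g ∈ H with gⁿ = ρ(D), setting b̂ = ρ(D) ρ(B) g ρ(B)⁻¹ ρ(D)⁻¹ and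
ê = ρ(D)⁻¹ ρ(E)⁻¹ g ρ(E) ρ(D), one has ρ(E)⁻¹ ρ(D)⁻¹ ê ρ(D) ρ(E) = ρ(B) ρ(D) b̂ ρ(D)⁻¹ ρ(B)⁻¹. -/
def PropertyTGK (n : ℕ) (H : Type*) [Group H] : Prop :=
  ∀ (ρ : G1SK →* H) (g : H), g ^ n = ρ (PresentedGroup.of 1) →
    ∀ bhat ehat : H,
      bhat = ρ (PresentedGroup.of 1) * ρ (PresentedGroup.of 0) * g *
        (ρ (PresentedGroup.of 0))⁻¹ * (ρ (PresentedGroup.of 1))⁻¹ →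
      ehat = (ρ (PresentedGroup.of 1))⁻¹ * (ρ (PresentedGroup.of 2))⁻¹ * g *
        ρ (PresentedGroup.of 2) * ρ (PresentedGroup.of 1) →
      (ρ (PresentedGroup.of 2))⁻¹ * (ρ (PresentedGroup.of 1))⁻¹ * ehat *
          ρ (PresentedGroup.of 1) * ρ (PresentedGroup.of 2) =
        ρ (PresentedGroup.of 0) * ρ (PresentedGroup.of 1) * bhat *
          (ρ (PresentedGroup.of 1))⁻¹ * (ρ (PresentedGroup.of 0))⁻¹

/-! ### Auxiliary material -/

private lemma stmt12_rel_one {α : Type*} {rels : Set (FreeGroup α)} {r : FreeGroup α}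
    (h : r ∈ rels) : PresentedGroup.mk rels r = 1 :=
  (QuotientGroup.eq_one_iff _).mpr (Subgroup.subset_normalClosure h)

private lemma stmt12_conj_gen {G : Type*} [Group G] (a x y : G) (n : ℕ)
    (h : x * a = a * y) : a * y ^ n = x ^ n * a := by
  have hy : y = a⁻¹ * x * a := by
    rw [mul_assoc, h, inv_mul_cancel_left]
  rw [hy, show a⁻¹ * x * a = a⁻¹ * x * (a⁻¹)⁻¹ by rw [inv_inv], conj_pow]
  group

section Aux

variable {H : Type*} [Group H] {n : ℕ}

private lemma stmt12_g1rel1 (ρ : G1SK →* H) :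
    ρ (PresentedGroup.of 0) * ρ (PresentedGroup.of 1) * ρ (PresentedGroup.of 0) =
      ρ (PresentedGroup.of 1) * ρ (PresentedGroup.of 0) * ρ (PresentedGroup.of 1) := by
  have h := congrArg ρ (stmt12_rel_one (rels := G1SKRels)
    (r := FreeGroup.of 0 * FreeGroup.of 1 * FreeGroup.of 0 *
      (FreeGroup.of 1 * FreeGroup.of 0 * FreeGroup.of 1)⁻¹) (by simp [G1SKRels]))
  rw [map_one] at h
  simp only [map_mul, map_inv] at h
  rw [mul_inv_eq_one] at h
  exact h

private lemma stmt12_g1rel2 (ρ : G1SK →* H) :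
    ρ (PresentedGroup.of 2) * ρ (PresentedGroup.of 1) * ρ (PresentedGroup.of 2) =
      ρ (PresentedGroup.of 1) * ρ (PresentedGroup.of 2) * ρ (PresentedGroup.of 1) := by
  have h := congrArg ρ (stmt12_rel_one (rels := G1SKRels)
    (r := FreeGroup.of 2 * FreeGroup.of 1 * FreeGroup.of 2 *
      (FreeGroup.of 1 * FreeGroup.of 2 * FreeGroup.of 1)⁻¹) (by simp [G1SKRels]))
  rw [map_one] at h
  simp only [map_mul, map_inv] at h
  rw [mul_inv_eq_one] at h
  exact h

private lemma stmt12_gnrel1 (φ : GnGK n →* H) :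
    φ (PresentedGroup.of 0) * φ (PresentedGroup.of 1) ^ n * φ (PresentedGroup.of 0) ^ n =
      φ (PresentedGroup.of 1) ^ n * φ (PresentedGroup.of 0) ^ n * φ (PresentedGroup.of 1) := by
  have h := congrArg φ (stmt12_rel_one (rels := GnGKRels n)
    (r := FreeGroup.of 0 * FreeGroup.of 1 ^ n * FreeGroup.of 0 ^ n *
      (FreeGroup.of 1 ^ n * FreeGroup.of 0 ^ n * FreeGroup.of 1)⁻¹) (by simp [GnGKRels]))
  rw [map_one] at h
  simp only [map_mul, map_inv, map_pow] at h
  rw [mul_inv_eq_one] at h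
  exact h

private lemma stmt12_gnrel2 (φ : GnGK n →* H) :
    φ (PresentedGroup.of 1) * φ (PresentedGroup.of 2) ^ n * φ (PresentedGroup.of 1) ^ n =
      φ (PresentedGroup.of 2) ^ n * φ (PresentedGroup.of 1) ^ n * φ (PresentedGroup.of 2) := by
  have h := congrArg φ (stmt12_rel_one (rels := GnGKRels n)
    (r := FreeGroup.of 1 * FreeGroup.of 2 ^ n * FreeGroup.of 1 ^ n *
      (FreeGroup.of 2 ^ n * FreeGroup.of 1 ^ n * FreeGroup.of 2)⁻¹) (by simp [GnGKRels]))
  rw [map_one] at h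
  simp only [map_mul, map_inv, map_pow] at h
  rw [mul_inv_eq_one] at h
  exact h

/-- The function defining the forward homomorphism `GnGK n →* H` from `(ρ, g)`. -/
private def stmt12_fwdAux (ρ : G1SK →* H) (g : H) : Fin 3 → H :=
  ![ρ (PresentedGroup.of 1) * ρ (PresentedGroup.of 0) * g *
      (ρ (PresentedGroup.of 0))⁻¹ * (ρ (PresentedGroup.of 1))⁻¹,
    g,
    (ρ (PresentedGroup.of 1))⁻¹ * (ρ (PresentedGroup.of 2))⁻¹ * g *
      ρ (PresentedGroup.of 2) * ρ (PresentedGroup.of 1)]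

private lemma stmt12_bhat_pow (ρ : G1SK →* H) (g : H)
    (hg : g ^ n = ρ (PresentedGroup.of 1)) :
    (ρ (PresentedGroup.of 1) * ρ (PresentedGroup.of 0) * g *
      (ρ (PresentedGroup.of 0))⁻¹ * (ρ (PresentedGroup.of 1))⁻¹) ^ n =
      ρ (PresentedGroup.of 0) := by
  set B := ρ (PresentedGroup.of 0)
  set D := ρ (PresentedGroup.of 1)
  have h1 : D * B * g * B⁻¹ * D⁻¹ = (D * B) * g * (D * B)⁻¹ := by group
  rw [h1, conj_pow, hg]
  rw [← stmt12_g1rel1 ρ]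
  simp only [B, D]
  group

private lemma stmt12_ehat_pow (ρ : G1SK →* H) (g : H)
    (hg : g ^ n = ρ (PresentedGroup.of 1)) :
    ((ρ (PresentedGroup.of 1))⁻¹ * (ρ (PresentedGroup.of 2))⁻¹ * g *
      ρ (PresentedGroup.of 2) * ρ (PresentedGroup.of 1)) ^ n =
      ρ (PresentedGroup.of 2) := by
  set D := ρ (PresentedGroup.of 1)
  set E := ρ (PresentedGroup.of 2)
  have h1 : D⁻¹ * E⁻¹ * g * E * D = (E * D)⁻¹ * g * ((E * D)⁻¹)⁻¹ := by group
  rw [h1, conj_pow, hg, inv_inv]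
  -- ⊢ (E * D)⁻¹ * D * (E * D) = E
  have h2 : (E * D) * E = D * (E * D) := by
    rw [← mul_assoc]
    exact stmt12_g1rel2 ρ
  rw [mul_assoc, ← h2]
  group

private lemma stmt12_fwd_lift (hT : PropertyTGK n H) (ρ : G1SK →* H) (g : H)
    (hg : g ^ n = ρ (PresentedGroup.of 1)) :
    ∀ r ∈ GnGKRels n, FreeGroup.lift (stmt12_fwdAux ρ g) r = 1 := by
  intro r hr
  set B := ρ (PresentedGroup.of 0)
  set D := ρ (PresentedGroup.of 1)
  set E := ρ (PresentedGroup.of 2)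
  set bh := D * B * g * B⁻¹ * D⁻¹ with hbh
  set eh := D⁻¹ * E⁻¹ * g * E * D with heh
  have hf0 : FreeGroup.lift (stmt12_fwdAux ρ g) (FreeGroup.of 0) = bh := by
    simp [stmt12_fwdAux, bh, B, D]
  have hf1 : FreeGroup.lift (stmt12_fwdAux ρ g) (FreeGroup.of 1) = g := by
    simp [stmt12_fwdAux]
  have hf2 : FreeGroup.lift (stmt12_fwdAux ρ g) (FreeGroup.of 2) = eh := by
    simp [stmt12_fwdAux, eh, D, E]
  have hbn : bh ^ n = B := stmt12_bhat_pow ρ g hg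
  have hen : eh ^ n = E := stmt12_ehat_pow ρ g hg
  simp only [GnGKRels, Set.mem_insert_iff, Set.mem_singleton_iff] at hr
  rcases hr with rfl | rfl | rfl
  · simp only [map_mul, map_inv, map_pow, hf0, hf1]
    rw [mul_inv_eq_one, hbn, hg]
    rw [hbh]; group
  · simp only [map_mul, map_inv, map_pow, hf1, hf2]
    rw [mul_inv_eq_one, hen, hg]
    rw [heh]; group
  · simp only [map_mul, map_inv, map_pow, hf0, hf1, hf2]
    rw [mul_inv_eq_one, hbn, hen, hg]
    have key := hT ρ g hg bh eh hbh heh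
    -- key : E⁻¹ * D⁻¹ * eh * D * E = B * D * bh * D⁻¹ * B⁻¹
    calc E⁻¹ * D⁻¹ * eh * D * E = B * D * bh * D⁻¹ * B⁻¹ := key

/-- The backward function: `φ ↦ (φ(of i)^n)`. -/
private def stmt12_bwdAux (φ : GnGK n →* H) : Fin 3 → H :=
  ![φ (PresentedGroup.of 0) ^ n, φ (PresentedGroup.of 1) ^ n, φ (PresentedGroup.of 2) ^ n]

private lemma stmt12_bwd_lift (φ : GnGK n →* H) :
    ∀ r ∈ G1SKRels, FreeGroup.lift (stmt12_bwdAux φ) r = 1 := by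
  intro r hr
  set x := φ (PresentedGroup.of 0)
  set y := φ (PresentedGroup.of 1)
  set z := φ (PresentedGroup.of 2)
  have hf0 : FreeGroup.lift (stmt12_bwdAux φ) (FreeGroup.of 0) = x ^ n := by
    simp [stmt12_bwdAux, x]
  have hf1 : FreeGroup.lift (stmt12_bwdAux φ) (FreeGroup.of 1) = y ^ n := by
    simp [stmt12_bwdAux, y]
  have hf2 : FreeGroup.lift (stmt12_bwdAux φ) (FreeGroup.of 2) = z ^ n := by
    simp [stmt12_bwdAux, z]
  simp only [G1SKRels, Set.mem_insert_iff, Set.mem_singleton_iff] at hr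
  rcases hr with rfl | rfl
  · simp only [map_mul, map_inv, hf0, hf1]
    rw [mul_inv_eq_one]
    have h1 : x * (y ^ n * x ^ n) = (y ^ n * x ^ n) * y := by
      rw [← mul_assoc, stmt12_gnrel1 φ, mul_assoc]
    have h2 := stmt12_conj_gen (y ^ n * x ^ n) x y n h1
    -- h2 : (y^n*x^n) * y^n = x^n * (y^n*x^n)
    rw [← mul_assoc] at h2
    exact h2.symm
  · simp only [map_mul, map_inv, hf1, hf2]
    rw [mul_inv_eq_one]
    have h1 : y * (z ^ n * y ^ n) = (z ^ n * y ^ n) * z := by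
      rw [← mul_assoc, stmt12_gnrel2 φ, mul_assoc]
    have h2 := stmt12_conj_gen (z ^ n * y ^ n) y z n h1
    rw [← mul_assoc] at h2
    exact h2

private def stmt12_fwd (hT : PropertyTGK n H)
    (p : Σ ρ : G1SK →* H, {g : H // g ^ n = ρ (PresentedGroup.of 1)}) :
    GnGK n →* H :=
  PresentedGroup.toGroup (stmt12_fwd_lift hT p.1 p.2.1 p.2.2)

private def stmt12_bwd (φ : GnGK n →* H) :
    Σ ρ : G1SK →* H, {g : H // g ^ n = ρ (PresentedGroup.of 1)} :=
  ⟨PresentedGroup.toGroup (stmt12_bwd_lift φ),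
    ⟨φ (PresentedGroup.of 1), by
      rw [show (PresentedGroup.toGroup (stmt12_bwd_lift φ)) (PresentedGroup.of 1)
          = stmt12_bwdAux φ 1 from PresentedGroup.toGroup.of _]
      simp [stmt12_bwdAux]⟩⟩

private lemma stmt12_left_inv (hT : PropertyTGK n H)
    (p : Σ ρ : G1SK →* H, {g : H // g ^ n = ρ (PresentedGroup.of 1)}) :
    stmt12_bwd (stmt12_fwd hT p) = p := by
  obtain ⟨ρ, g, hg⟩ := p
  have hφ : ∀ i : Fin 3, stmt12_fwd hT ⟨ρ, g, hg⟩ (PresentedGroup.of i) = stmt12_fwdAux ρ g i :=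
    fun i => PresentedGroup.toGroup.of (stmt12_fwd_lift hT ρ g hg)
  have h1 : (stmt12_bwd (stmt12_fwd hT ⟨ρ, g, hg⟩)).1 = ρ := by
    apply PresentedGroup.ext
    intro i
    rw [show (stmt12_bwd (stmt12_fwd hT ⟨ρ, g, hg⟩)).1 (PresentedGroup.of i)
        = stmt12_bwdAux (stmt12_fwd hT ⟨ρ, g, hg⟩) i from
        PresentedGroup.toGroup.of (stmt12_bwd_lift (stmt12_fwd hT ⟨ρ, g, hg⟩))]
    fin_cases i
    · show (stmt12_fwd hT ⟨ρ, g, hg⟩ (PresentedGroup.of 0)) ^ n = ρ (PresentedGroup.of 0)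
      rw [hφ 0]
      have := stmt12_bhat_pow ρ g hg
      simpa [stmt12_fwdAux] using this
    · show (stmt12_fwd hT ⟨ρ, g, hg⟩ (PresentedGroup.of 1)) ^ n = ρ (PresentedGroup.of 1)
      rw [hφ 1]
      simpa [stmt12_fwdAux] using hg
    · show (stmt12_fwd hT ⟨ρ, g, hg⟩ (PresentedGroup.of 2)) ^ n = ρ (PresentedGroup.of 2)
      rw [hφ 2]
      have := stmt12_ehat_pow ρ g hg
      simpa [stmt12_fwdAux] using this
  have h2 : (stmt12_bwd (stmt12_fwd hT ⟨ρ, g, hg⟩)).2.1 = g := by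
    show stmt12_fwd hT ⟨ρ, g, hg⟩ (PresentedGroup.of 1) = g
    rw [hφ 1]
    simp [stmt12_fwdAux]
  exact Sigma.subtype_ext h1 h2

private lemma stmt12_right_inv (hT : PropertyTGK n H) (φ : GnGK n →* H) :
    stmt12_fwd hT (stmt12_bwd φ) = φ := by
  set x := φ (PresentedGroup.of 0) with hx
  set y := φ (PresentedGroup.of 1) with hy
  set z := φ (PresentedGroup.of 2) with hz
  have hρ : ∀ i : Fin 3, (stmt12_bwd φ).1 (PresentedGroup.of i) = stmt12_bwdAux φ i :=
    fun i => PresentedGroup.toGroup.of (stmt12_bwd_lift φ)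
  have hρ0 : (stmt12_bwd φ).1 (PresentedGroup.of 0) = x ^ n := by
    rw [hρ 0]; simp [stmt12_bwdAux, x]
  have hρ1 : (stmt12_bwd φ).1 (PresentedGroup.of 1) = y ^ n := by
    rw [hρ 1]; simp [stmt12_bwdAux, y]
  have hρ2 : (stmt12_bwd φ).1 (PresentedGroup.of 2) = z ^ n := by
    rw [hρ 2]; simp [stmt12_bwdAux, z]
  have hg : (stmt12_bwd φ).2.1 = y := rfl
  apply PresentedGroup.ext
  intro i
  have hv : stmt12_fwd hT (stmt12_bwd φ) (PresentedGroup.of i)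
      = stmt12_fwdAux (stmt12_bwd φ).1 (stmt12_bwd φ).2.1 i :=
    PresentedGroup.toGroup.of (stmt12_fwd_lift hT (stmt12_bwd φ).1 (stmt12_bwd φ).2.1 (stmt12_bwd φ).2.2)
  fin_cases i
  · rw [hv]
    show (stmt12_bwd φ).1 (PresentedGroup.of 1) * (stmt12_bwd φ).1 (PresentedGroup.of 0) *
        (stmt12_bwd φ).2.1 * ((stmt12_bwd φ).1 (PresentedGroup.of 0))⁻¹ *
        ((stmt12_bwd φ).1 (PresentedGroup.of 1))⁻¹ = x
    rw [hg, hρ0, hρ1]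
    rw [← stmt12_gnrel1 φ]
    simp only [x, y]
    group
  · rw [hv]
    exact hg
  · rw [hv]
    show ((stmt12_bwd φ).1 (PresentedGroup.of 1))⁻¹ * ((stmt12_bwd φ).1 (PresentedGroup.of 2))⁻¹ *
        (stmt12_bwd φ).2.1 * (stmt12_bwd φ).1 (PresentedGroup.of 2) *
        (stmt12_bwd φ).1 (PresentedGroup.of 1) = z
    rw [hg, hρ1, hρ2]
    apply mul_left_cancel (a := z ^ n * y ^ n)
    have h1 : z ^ n * y ^ n * z = y * z ^ n * y ^ n := (stmt12_gnrel2 φ).symm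
    rw [h1]
    group

end Aux

theorem stmt_12 (n : ℕ) (hn : 0 < n) (H : Type*) [Group H] [Finite H]
    (hT : PropertyTGK n H) :
    Nat.card (GnGK n →* H) =
      ∑ᶠ ρ : G1SK →* H, Nat.card {g : H // g ^ n = ρ (PresentedGroup.of 1)} := by
  classical
  have e : (GnGK n →* H) ≃ Σ ρ : G1SK →* H, {g : H // g ^ n = ρ (PresentedGroup.of 1)} :=
    { toFun := stmt12_bwd
      invFun := stmt12_fwd hT
      left_inv := stmt12_right_inv hT
      right_inv := stmt12_left_inv hT }
  have hfin : Finite (G1SK →* H) := by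
    apply Finite.of_injective (fun ρ => fun i : Fin 3 => ρ (PresentedGroup.of i))
    intro f g h
    exact PresentedGroup.ext fun i => congrFun h i
  letI : Fintype (G1SK →* H) := Fintype.ofFinite _
  letI : ∀ ρ : G1SK →* H, Fintype {g : H // g ^ n = ρ (PresentedGroup.of 1)} :=
    fun ρ => Fintype.ofFinite _
  rw [Nat.card_congr e, Nat.card_eq_fintype_card, Fintype.card_sigma,
    finsum_eq_sum_of_fintype]
  simp [Nat.card_eq_fintype_card]
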